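/- Let R be a commutative ring and A a commutative Hopf algebra over R with comultiplication Δ and antipode σ. Define Δ_γ : A → A ⊗_R A as the composite Δ_γ = (id_A ⊗ σ) ∘ τ ∘ Δ, where τ : A ⊗_R A → A ⊗_R A is the flip (so in Sweedler notation Δ_γ(f) = f₂ ⊗ σ(f₁)). Then an R-linear endomorphism ξ : A → A satisfies Δ_γ ∘ ξ = (ξ ⊗ id_A) ∘ Δ_γ if and only if it satisfies Δ ∘ ξ = (id_A ⊗ ξ) ∘ Δ. -/

import Mathlib

/-!
For commutative `A` the antipode is an involution, so `σ ⊗ id` is injective. Since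
`Δ_γ = τ ∘ (σ ⊗ id) ∘ Δ` and `ξ ⊗ id` moves past `τ ∘ (σ ⊗ id)` as `id ⊗ ξ`, the two sides of the
first identity are `τ ∘ (σ ⊗ id)` applied to the two sides of the second, which can be cancelled.
-/

open TensorProduct

noncomputable section

variable (R A : Type*) [CommRing R] [CommRing A] [HopfAlgebra R A]

/-- The coaction `Δ_γ = (id_A ⊗ σ) ∘ τ ∘ Δ`, where `τ` is the flip of the two tensor factors;
in Sweedler notation `Δ_γ(f) = f₂ ⊗ σ(f₁)`. -/
def deltaGamma : A →ₗ[R] A ⊗[R] A :=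
  LinearMap.lTensor A (HopfAlgebra.antipode R : A →ₗ[R] A) ∘ₗ
    (TensorProduct.comm R A A).toLinearMap ∘ₗ Coalgebra.comul

namespace HopfAlgebra

variable {S H : Type*} [CommSemiring S] [CommSemiring H] [HopfAlgebra S H]

open WithConv in
/-- `σ ∘ σ` is a left convolution inverse of `σ`, whose right inverse is `id`. -/
theorem antipode_comp_antipode : antipode S ∘ₗ antipode S = (LinearMap.id : H →ₗ[S] H) := by
  have h : toConv (antipode S ∘ₗ antipode S) * toConv (antipode S) =
      (1 : WithConv (H →ₗ[S] H)) := by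
    have := LinearMap.algHom_comp_convMul_distrib (antipodeAlgHom S H) (toConv (antipode S))
      (toConv .id)
    simp only [LinearMap.antipode_mul_id, toLinearMap_antipodeAlgHom, LinearMap.comp_id] at this
    apply ofConv_injective
    rw [← this, LinearMap.convOne_def]
    ext
    exact (antipodeAlgHom S H).commutes _
  exact congr(ofConv $(left_inv_eq_right_inv h LinearMap.antipode_mul_id))

theorem rTensor_antipode_injective (M : Type*) [AddCommMonoid M] [Module S M] :
    Function.Injective ((antipode S : H →ₗ[S] H).rTensor M) :=
  Function.LeftInverse.injective (g := (antipode S : H →ₗ[S] H).rTensor M) fun x => by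
    rw [← LinearMap.comp_apply, ← LinearMap.rTensor_comp, antipode_comp_antipode,
      LinearMap.rTensor_id, LinearMap.id_apply]

end HopfAlgebra

/-- **Theorem (cf. Ardakov, proof of Proposition "LieTriangle": (\ref{DeltaRhoL}) ⟺
(\ref{WaterhouseInvDefn})).**
Let `A` be a commutative Hopf algebra over a commutative ring `R` with comultiplication `Δ`
and antipode `σ`, and let `Δ_γ := (id_A ⊗ σ) ∘ τ ∘ Δ` where `τ` is the flip.  Then an
`R`-linear endomorphism `ξ : A → A` satisfies `Δ_γ ∘ ξ = (ξ ⊗ id_A) ∘ Δ_γ` if and only if it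
satisfies `Δ ∘ ξ = (id_A ⊗ ξ) ∘ Δ`. -/
theorem statement6 (ξ : A →ₗ[R] A) :
    deltaGamma R A ∘ₗ ξ = LinearMap.rTensor A ξ ∘ₗ deltaGamma R A ↔
      Coalgebra.comul (R := R) ∘ₗ ξ = LinearMap.lTensor A ξ ∘ₗ Coalgebra.comul := by
  set e := (TensorProduct.comm R A A).toLinearMap ∘ₗ
    (HopfAlgebra.antipode R : A →ₗ[R] A).rTensor A
  have he : Function.Injective e :=
    (TensorProduct.comm R A A).injective.comp (HopfAlgebra.rTensor_antipode_injective A)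
  have hdeltaGamma : deltaGamma R A = e ∘ₗ Coalgebra.comul := by
    rw [deltaGamma, ← LinearMap.comp_assoc, LinearMap.lTensor_comp_comm, LinearMap.comp_assoc]
  have hξ : ξ.rTensor A ∘ₗ e ∘ₗ Coalgebra.comul = e ∘ₗ ξ.lTensor A ∘ₗ Coalgebra.comul := by
    simp only [e, ← LinearMap.comp_assoc, LinearMap.rTensor_comp_comm]
    simp only [LinearMap.comp_assoc, LinearMap.lTensor_comp_rTensor,
      LinearMap.rTensor_comp_lTensor]
  rw [hdeltaGamma, LinearMap.comp_assoc, hξ]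
  exact LinearMap.cancel_left he

end
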